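/- Let a, b be nonzero real numbers with a² = 2b², and let n₄(a,b,a,b) be the Lie algebra structure on ℝ⁷ with nonzero brackets [e₁,e₂] = −a e₃, [e₁,e₃] = −b e₆, [e₂,e₄] = −a e₆, [e₁,e₅] = −b e₇. Let φ₄ = −e^{124}−e^{456}+e^{347}+e^{135}+e^{167}+e^{257}−e^{236}, τ₄ = −a e^{34} + a e^{16} − b e^{56} + b e^{37}, λ = 9b², and let D be the endomorphism with De₁ = −b² e₁ − ab e₅, De₂ = −2b² e₂, De₃ = −3b² e₃, De₄ = −2b² e₄ − ab e₇, De₅ = −3b² e₅, De₆ = −4b² e₆, De₇ = −4b² e₇. Then: (i) dφ₄ = 0; (ii) D is a derivation of n₄(a,b,a,b); (iii) dτ₄ = −4b² e^{124} + 2b² e^{135} + ab e^{127} + ab e^{245}; and (iv) λφ₄ + L_D φ₄ = −4b² e^{124} + 2b² e^{135} + ab e^{127} + ab e^{245}. Hence dτ₄ = λφ₄ + L_D φ₄, i.e. (n₄(a,b,a,b), φ₄) is an expanding semi-algebraic Laplacian soliton, since dτ₄ = Δ_{φ₄} φ₄. -/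

import Mathlib

noncomputable section

/-- `ℝ⁷` with its standard basis. -/
abbrev V7 := Fin 7 → ℝ

/-- `e^{i₁…i_k}`, the wedge of dual-basis covectors, in the determinant convention:
`(e^{i₁}∧…∧e^{i_k})(X₁,…,X_k) = det (Xₚ)_{i_q}`. -/
def wE {k : ℕ} (idx : Fin k → Fin 7) (X : Fin k → V7) : ℝ :=
  Matrix.det (Matrix.of fun p q : Fin k => X p (idx q))

/-- The index in `{0, …, k}` of the `m`-th element (0-based) of `{0, …, k} \ {i, j}`,
assuming `i < j`. -/
def skip2 (i j m : ℕ) : ℕ := if m < i then m else if m < j - 1 then m + 1 else m + 2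

/-- The Chevalley–Eilenberg differential of a `k`-form `ψ` with respect to a bracket `br`:
`dψ(X₁,…,X_{k+1}) = Σ_{i<j} (−1)^{i+j} ψ([Xᵢ,Xⱼ], X₁,…,X̂ᵢ,…,X̂ⱼ,…,X_{k+1})`. -/
def CEd {V : Type*} (br : V → V → V) {k : ℕ} (ψ : (Fin k → V) → ℝ)
    (X : Fin (k + 1) → V) : ℝ :=
  ∑ i : Fin (k + 1), ∑ j : Fin (k + 1),
    if (i : ℕ) < (j : ℕ) then
      (-1 : ℝ) ^ ((i : ℕ) + (j : ℕ)) *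
        ψ (fun l => if (l : ℕ) = 0 then br (X i) (X j)
          else X ⟨min (skip2 (i : ℕ) (j : ℕ) ((l : ℕ) - 1)) k,
            Nat.lt_succ_of_le (Nat.min_le_right _ _)⟩)
    else 0

/-- The algebraic Lie derivative of a `k`-form with respect to an endomorphism `D`:
`(L_D ψ)(X₁,…,X_k) = ψ(DX₁,X₂,…,X_k) + … + ψ(X₁,…,X_{k−1},DX_k)`. -/
def LD {V : Type*} (D : V → V) {k : ℕ} (ψ : (Fin k → V) → ℝ) (X : Fin k → V) : ℝ :=
  ∑ i : Fin k, ψ (Function.update X i (D (X i)))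

/-- The Lie bracket of `n₄(a,b,a,b)`: `[e₁,e₂] = −a e₃`, `[e₁,e₃] = −b e₆`,
`[e₂,e₄] = −a e₆`, `[e₁,e₅] = −b e₇`. -/
def br4 (a b : ℝ) (X Y : V7) : V7 :=
  ![0, 0, -a * (X 0 * Y 1 - X 1 * Y 0), 0, 0,
    -b * (X 0 * Y 2 - X 2 * Y 0) - a * (X 1 * Y 3 - X 3 * Y 1),
    -b * (X 0 * Y 4 - X 4 * Y 0)]

/-- `φ₄ = −e^{124}−e^{456}+e^{347}+e^{135}+e^{167}+e^{257}−e^{236}`. -/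
def phi4 : (Fin 3 → V7) → ℝ := fun X =>
  -wE ![0, 1, 3] X - wE ![3, 4, 5] X + wE ![2, 3, 6] X + wE ![0, 2, 4] X
    + wE ![0, 5, 6] X + wE ![1, 4, 6] X - wE ![1, 2, 5] X

/-- `τ₄ = −a e^{34} + a e^{16} − b e^{56} + b e^{37}`. -/
def tau4 (a b : ℝ) : (Fin 2 → V7) → ℝ := fun X =>
  -a * wE ![2, 3] X + a * wE ![0, 5] X - b * wE ![4, 5] X + b * wE ![2, 6] X

/-- `De₁ = −b²e₁ − ab e₅`, `De₂ = −2b²e₂`, `De₃ = −3b²e₃`, `De₄ = −2b²e₄ − ab e₇`,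
`De₅ = −3b²e₅`, `De₆ = −4b²e₆`, `De₇ = −4b²e₇`. -/
def D4 (a b : ℝ) (X : V7) : V7 :=
  ![-b ^ 2 * X 0, -2 * b ^ 2 * X 1, -3 * b ^ 2 * X 2, -2 * b ^ 2 * X 3,
    -a * b * X 0 - 3 * b ^ 2 * X 4, -4 * b ^ 2 * X 5, -a * b * X 3 - 4 * b ^ 2 * X 6]

set_option maxHeartbeats 4000000

lemma vc5 (x0 x1 x2 x3 x4 x5 x6 : ℝ) : ![x0,x1,x2,x3,x4,x5,x6] 5 = x5 := rfl
end

/-!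
The four identities are polynomial identities in the coordinates of the arguments: the
Chevalley–Eilenberg differential of a 2- or 3-form and the Lie derivative of a 3-form unfold into
finitely many evaluations of the form, and each monomial `e^{ij}`, `e^{ijk}` is a small
determinant. Only `dτ₄` involves the constraint: its `e^{124}`-coefficient is `−2a²`,
which is `−4b²` exactly when `a² = 2b²`.
-/

section Expansions

variable {V : Type*}

theorem CEd_two_apply (br : V → V → V) (ψ : (Fin 2 → V) → ℝ) (X : Fin 3 → V) :
    CEd br ψ X = -ψ ![br (X 0) (X 1), X 2] + ψ ![br (X 0) (X 2), X 1]
      - ψ ![br (X 1) (X 2), X 0] := by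
  simp only [CEd, Fin.sum_univ_succ, Fin.sum_univ_zero]
  norm_num [skip2]
  abel_nf
  congr! <;> rename_i l <;> fin_cases l <;> rfl

theorem CEd_three_apply (br : V → V → V) (ψ : (Fin 3 → V) → ℝ) (X : Fin 4 → V) :
    CEd br ψ X = -ψ ![br (X 0) (X 1), X 2, X 3] + ψ ![br (X 0) (X 2), X 1, X 3]
      - ψ ![br (X 0) (X 3), X 1, X 2] - ψ ![br (X 1) (X 2), X 0, X 3]
      + ψ ![br (X 1) (X 3), X 0, X 2] - ψ ![br (X 2) (X 3), X 0, X 1] := by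
  simp only [CEd, Fin.sum_univ_succ, Fin.sum_univ_zero]
  norm_num [skip2]
  abel_nf
  congr! <;> rename_i l <;> fin_cases l <;> rfl

theorem LD_three_apply (D : V → V) (ψ : (Fin 3 → V) → ℝ) (X : Fin 3 → V) :
    LD D ψ X = ψ ![D (X 0), X 1, X 2] + ψ ![X 0, D (X 1), X 2] + ψ ![X 0, X 1, D (X 2)] := by
  simp only [LD, Fin.sum_univ_three]
  congr! <;> funext l <;> fin_cases l <;> rfl

end Expansions

theorem wE_two_apply (i j : Fin 7) (X : Fin 2 → V7) :
    wE ![i, j] X = X 0 i * X 1 j - X 0 j * X 1 i := by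
  simp [wE, Matrix.det_fin_two]

theorem wE_three_apply (i j k : Fin 7) (X : Fin 3 → V7) :
    wE ![i, j, k] X = X 0 i * X 1 j * X 2 k - X 0 i * X 1 k * X 2 j
      - X 0 j * X 1 i * X 2 k + X 0 j * X 1 k * X 2 i
      + X 0 k * X 1 i * X 2 j - X 0 k * X 1 j * X 2 i := by
  simp [wE, Matrix.det_fin_three]

theorem CEd_br4_phi4 (a b : ℝ) : CEd (br4 a b) phi4 = fun _ => 0 := by
  funext X
  simp only [CEd_three_apply, phi4, wE_three_apply, br4,
    Matrix.cons_val_zero, Matrix.cons_val_one, Matrix.cons_val]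
  ring

theorem D4_br4 (a b : ℝ) (X Y : V7) :
    D4 a b (br4 a b X Y) = br4 a b (D4 a b X) Y + br4 a b X (D4 a b Y) := by
  funext i
  fin_cases i <;>
    simp only [D4, br4, Pi.add_apply, Fin.zero_eta, Fin.mk_one, Fin.reduceFinMk,
      Matrix.cons_val_zero, Matrix.cons_val_one, Matrix.cons_val] <;>
    ring

def laplacianPhi4 (a b : ℝ) (X : Fin 3 → V7) : ℝ :=
  -4 * b ^ 2 * wE ![0, 1, 3] X + 2 * b ^ 2 * wE ![0, 2, 4] X
    + a * b * wE ![0, 1, 6] X + a * b * wE ![1, 3, 4] X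

theorem CEd_br4_tau4 (a b : ℝ) (hab : a ^ 2 = 2 * b ^ 2) :
    CEd (br4 a b) (tau4 a b) = laplacianPhi4 a b := by
  funext X
  simp only [CEd_two_apply, tau4, wE_two_apply, laplacianPhi4, wE_three_apply, br4,
    Matrix.cons_val_zero, Matrix.cons_val_one, Matrix.cons_val]
  linear_combination (norm := (simp only [wE_three_apply]; ring))
    (-2 * wE ![0, 1, 3] X) * hab

theorem mul_phi4_add_LD_D4_phi4 (a b : ℝ) :
    (fun X => 9 * b ^ 2 * phi4 X + LD (D4 a b) phi4 X) = laplacianPhi4 a b := by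
  funext X
  simp only [LD_three_apply, phi4, wE_three_apply, D4, laplacianPhi4,
    Matrix.cons_val_zero, Matrix.cons_val_one, Matrix.cons_val]
  ring

theorem n4_semialgebraic_soliton_general (a b : ℝ) (hb : b ≠ 0)
    (hab : a ^ 2 = 2 * b ^ 2) :
    (CEd (br4 a b) phi4 = fun _ => (0 : ℝ)) ∧
      (∀ X Y : V7, D4 a b (br4 a b X Y) = br4 a b (D4 a b X) Y + br4 a b X (D4 a b Y)) ∧
      (CEd (br4 a b) (tau4 a b) = fun X =>
        -4 * b ^ 2 * wE ![0, 1, 3] X + 2 * b ^ 2 * wE ![0, 2, 4] X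
          + a * b * wE ![0, 1, 6] X + a * b * wE ![1, 3, 4] X) ∧
      ((fun X => 9 * b ^ 2 * phi4 X + LD (D4 a b) phi4 X) = fun X =>
        -4 * b ^ 2 * wE ![0, 1, 3] X + 2 * b ^ 2 * wE ![0, 2, 4] X
          + a * b * wE ![0, 1, 6] X + a * b * wE ![1, 3, 4] X) ∧
      (CEd (br4 a b) (tau4 a b) =
        fun X => 9 * b ^ 2 * phi4 X + LD (D4 a b) phi4 X) ∧
      0 < 9 * b ^ 2 := by
  have hd := CEd_br4_tau4 a b hab
  have hL := mul_phi4_add_LD_D4_phi4 a b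
  exact ⟨CEd_br4_phi4 a b, D4_br4 a b, hd, hL, hd.trans hL.symm, by positivity⟩

/-- `(n₄(a,b,a,b), φ₄)` with `a² = 2b²` is an expanding semi-algebraic Laplacian soliton
with `λ = 9b²`: (i) `dφ₄ = 0`; (ii) `D` is a derivation;
(iii) `dτ₄ = −4b² e^{124} + 2b² e^{135} + ab e^{127} + ab e^{245}`;
(iv) `λφ₄ + L_D φ₄` equals the same 3-form; hence `dτ₄ = λφ₄ + L_D φ₄` with `λ > 0`. -/
theorem n4_semialgebraic_soliton (a b : ℝ) (ha : a ≠ 0) (hb : b ≠ 0)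
    (hab : a ^ 2 = 2 * b ^ 2) :
    (CEd (br4 a b) phi4 = fun _ => (0 : ℝ)) ∧
      (∀ X Y : V7, D4 a b (br4 a b X Y) = br4 a b (D4 a b X) Y + br4 a b X (D4 a b Y)) ∧
      (CEd (br4 a b) (tau4 a b) = fun X =>
        -4 * b ^ 2 * wE ![0, 1, 3] X + 2 * b ^ 2 * wE ![0, 2, 4] X
          + a * b * wE ![0, 1, 6] X + a * b * wE ![1, 3, 4] X) ∧
      ((fun X => 9 * b ^ 2 * phi4 X + LD (D4 a b) phi4 X) = fun X =>
        -4 * b ^ 2 * wE ![0, 1, 3] X + 2 * b ^ 2 * wE ![0, 2, 4] X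
          + a * b * wE ![0, 1, 6] X + a * b * wE ![1, 3, 4] X) ∧
      (CEd (br4 a b) (tau4 a b) =
        fun X => 9 * b ^ 2 * phi4 X + LD (D4 a b) phi4 X) ∧
      0 < 9 * b ^ 2 :=
  n4_semialgebraic_soliton_general a b hb hab
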